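/- Let A be a type and B a type. The map sending a function g : Trunc A → B to its composite g ∘ Trunc.mk is a bijection (an Equiv) between the type of functions Trunc A → B and the subtype of weakly constant functions {f : A → B // ∀ x y, f x = f y}. -/

import Mathlib

theorem Trunc.hom_ext {A B : Sort*} {g h : Trunc A → B} (hgh : ∀ a, g (Trunc.mk a) = h (Trunc.mk a)) :
    g = h :=
  funext (Trunc.ind hgh)

theorem stmt0 {A B : Type*} :
    Function.Bijective (fun g : Trunc A → B =>
      (⟨fun a => g (Trunc.mk a), fun x y => congrArg g (Subsingleton.elim _ _)⟩ :
        {f : A → B // ∀ x y, f x = f y})) := by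
  constructor
  · intro g h hgh
    exact Trunc.hom_ext fun a => congrFun (congrArg Subtype.val hgh) a
  · rintro ⟨f, hf⟩
    exact ⟨Trunc.lift f hf, rfl⟩
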